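/- Let (X, D) be the amalgamation of a metric d along a finite clopen partition {B_i}_{i=1}^n with metrics e_i on B_i. If each (B_i, e_i) admits a bi-Lipschitz embedding into an ultrametric space (equivalently, is uniformly disconnected), then (X, D) is uniformly disconnected. -/

import Mathlib

/-!
Inside a block, uniform disconnectedness means that a chain whose steps are at most `M` spans
distance `O(M)`; a bi-Lipschitz image of a chain in an ultrametric space spans at most its
largest step. A chain that leaves its starting block must cross between two distinct
basepoints, so its largest step `M` is at least the least distance between basepoints, and
before crossing it stays within `O(M)` of its own basepoint. The same holds at the end of the
chain, and the remaining distance between the two basepoints is bounded by a fixed multiple of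
the least one, hence by `O(M)`.
-/

open Set Topology

/-- `d` is a metric (as a two-variable real function) on the whole type `X`. -/
def IsMetricOn {X : Type*} (d : X → X → ℝ) : Prop :=
  (∀ x y, d x y = 0 ↔ x = y) ∧ (∀ x y, d x y = d y x) ∧ ∀ x y z, d x y ≤ d x z + d z y

/-- `d` is a metric on the subset `A` of `X`. -/
def IsMetricOnSet {X : Type*} (A : Set X) (d : X → X → ℝ) : Prop :=
  (∀ x ∈ A, ∀ y ∈ A, (d x y = 0 ↔ x = y)) ∧ (∀ x ∈ A, ∀ y ∈ A, d x y = d y x) ∧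
    ∀ x ∈ A, ∀ y ∈ A, ∀ z ∈ A, d x y ≤ d x z + d z y

/-- `d` is an ultrametric on the whole type `Y`. -/
def IsUltrametricOn {Y : Type*} (d : Y → Y → ℝ) : Prop :=
  (∀ x y, d x y = 0 ↔ x = y) ∧ (∀ x y, d x y = d y x) ∧
    ∀ x y z, d x y ≤ max (d x z) (d z y)

/-- `d` is uniformly disconnected: there is `δ ∈ (0,1)` such that for every finite
chain `z 0, …, z N` with `z 0 ≠ z N`, one has `δ·d(z 0, z N) ≤ max_i d(z i, z (i+1))`. -/
def UniformlyDisconnected {X : Type*} (d : X → X → ℝ) : Prop :=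
  ∃ δ : ℝ, 0 < δ ∧ δ < 1 ∧ ∀ (N : ℕ) (z : ℕ → X), 0 < N → z 0 ≠ z N →
    ∃ k < N, δ * d (z 0) (z N) ≤ d (z k) (z (k + 1))

section General

variable {X : Type*}

lemma IsMetricOn.nonneg {d : X → X → ℝ} (hd : IsMetricOn d) (x y : X) : 0 ≤ d x y := by
  linarith [hd.2.2 x x y, hd.2.1 y x, (hd.1 x x).2 rfl]

lemma IsMetricOn.pos_of_ne {d : X → X → ℝ} (hd : IsMetricOn d) {x y : X} (h : x ≠ y) :
    0 < d x y :=
  (hd.nonneg x y).lt_of_ne fun h0 => h ((hd.1 x y).1 h0.symm)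

lemma IsMetricOnSet.nonneg {A : Set X} {d : X → X → ℝ} (hd : IsMetricOnSet A d) {x y : X}
    (hx : x ∈ A) (hy : y ∈ A) : 0 ≤ d x y := by
  linarith [hd.2.2 x hx x hx y hy, hd.2.1 y hy x hx, (hd.1 x hx x hx).2 rfl]

lemma IsUltrametricOn.chain_le {ρ : X → X → ℝ} (hρ : IsUltrametricOn ρ) (w : ℕ → X) {M : ℝ}
    (hM : 0 ≤ M) (N : ℕ) (hstep : ∀ k < N, ρ (w k) (w (k + 1)) ≤ M) : ρ (w 0) (w N) ≤ M := by
  induction N with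
  | zero => rw [(hρ.1 _ _).2 rfl]; exact hM
  | succ N ih =>
    exact (hρ.2.2 _ _ (w N)).trans
      (max_le (ih fun k hk => hstep k (by omega)) (hstep N N.lt_succ_self))

def ChainBoundedOn (A : Set X) (d : X → X → ℝ) (K : ℝ) : Prop :=
  ∀ (N : ℕ) (z : ℕ → X), (∀ k ≤ N, z k ∈ A) → ∀ M, 0 ≤ M →
    (∀ k < N, d (z k) (z (k + 1)) ≤ M) → d (z 0) (z N) ≤ K * M

lemma ChainBoundedOn.mono {A : Set X} {d : X → X → ℝ} {K K' : ℝ} (h : ChainBoundedOn A d K)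
    (hK : K ≤ K') : ChainBoundedOn A d K' :=
  fun N z hz M hM hstep => (h N z hz M hM hstep).trans (mul_le_mul_of_nonneg_right hK hM)

lemma exists_forall_chainBoundedOn {I : Type*} [Finite I] {A : I → Set X}
    {d : I → X → X → ℝ} (h : ∀ i, ∃ K, ChainBoundedOn (A i) (d i) K) :
    ∃ K, ∀ i, ChainBoundedOn (A i) (d i) K := by
  choose K hK using h
  obtain ⟨K₀, hK₀⟩ := (Set.finite_range K).bddAbove
  exact ⟨K₀, fun i => (hK i).mono (hK₀ ⟨i, rfl⟩)⟩

lemma IsUltrametricOn.chainBoundedOn_of_biLipschitz {Y : Type*} {ρ : Y → Y → ℝ}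
    (hρ : IsUltrametricOn ρ) {A : Set X} {e : X → X → ℝ} {f : X → Y} {L : ℝ} (hL : 0 < L)
    (hf : ∀ x ∈ A, ∀ y ∈ A, L⁻¹ * e x y ≤ ρ (f x) (f y) ∧ ρ (f x) (f y) ≤ L * e x y) :
    ChainBoundedOn A e (L * L) := by
  intro N z hz M hM hstep
  have hchain : ρ (f (z 0)) (f (z N)) ≤ L * M :=
    hρ.chain_le (f ∘ z) (by positivity) N fun k hk =>
      (hf _ (hz k hk.le) _ (hz (k + 1) hk)).2.trans (by gcongr; exact hstep k hk)
  calc e (z 0) (z N) = L * (L⁻¹ * e (z 0) (z N)) := by field_simp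
    _ ≤ L * (L * M) :=
      mul_le_mul_of_nonneg_left ((hf _ (hz 0 N.zero_le) _ (hz N le_rfl)).1.trans hchain) hL.le
    _ = L * L * M := by ring

lemma uniformlyDisconnected_of_chainBoundedOn_univ {d : X → X → ℝ} {K : ℝ}
    (hnn : ∀ x y, 0 ≤ d x y) (h : ChainBoundedOn univ d K) : UniformlyDisconnected d := by
  refine ⟨(|K| + 2)⁻¹, by positivity, inv_lt_one_of_one_lt₀ (by linarith [abs_nonneg K]), ?_⟩
  intro N z hN _
  obtain ⟨k, hk, hmax⟩ := (Finset.range N).exists_max_image (fun k => d (z k) (z (k + 1)))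
    ⟨0, Finset.mem_range.2 hN⟩
  refine ⟨k, Finset.mem_range.1 hk, ?_⟩
  have hM := hnn (z k) (z (k + 1))
  have hspan : d (z 0) (z N) ≤ |K| * d (z k) (z (k + 1)) :=
    (h N z (fun _ _ => mem_univ _) _ hM fun l hl => hmax l (Finset.mem_range.2 hl)).trans
      (by gcongr; exact le_abs_self K)
  rw [inv_mul_le_iff₀ (by positivity)]
  nlinarith [abs_nonneg K]

lemma exists_first_exit {α : Type*} (f : ℕ → α) {N k : ℕ} (hkN : k ≤ N) (hk : f k ≠ f 0) :
    ∃ t < N, (∀ l ≤ t, f l = f 0) ∧ f (t + 1) ≠ f 0 := by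
  classical
  have hk0 : k ≠ 0 := by rintro rfl; exact hk rfl
  have hex : ∃ t, f (t + 1) ≠ f 0 := ⟨k - 1, by rwa [Nat.sub_add_cancel (by omega)]⟩
  refine ⟨Nat.find hex, ?_, fun l hl => ?_, Nat.find_spec hex⟩
  · have := Nat.find_min' hex (m := k - 1) (by rwa [Nat.sub_add_cancel (by omega)])
    omega
  · rcases l with _ | l
    · rfl
    · exact not_not.1 (Nat.find_min hex (by omega))

lemma exists_nonneg_forall_le_mul {α β : Type*} [Finite α] [Finite β] (f : α → ℝ)
    (g : β → ℝ) : ∃ Λ, 0 ≤ Λ ∧ ∀ a b, 0 < g b → f a ≤ Λ * g b := by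
  obtain ⟨Λ, hΛ⟩ := (Set.finite_range fun q : α × β => f q.1 / g q.2).bddAbove
  refine ⟨max Λ 0, le_max_right _ _, fun a b hb => ?_⟩
  calc f a = f a / g b * g b := by field_simp
    _ ≤ max Λ 0 * g b := by
      gcongr; exact (hΛ ⟨(a, b), rfl⟩).trans (le_max_left _ _)

end General

/-- `D` glues the spaces `(B i, e i)` at their basepoints `p i`, placed at the mutual
distances given by `d`; `ι x` is the block containing `x`. -/
structure IsAmalgamation {X : Type*} {n : ℕ} (d : X → X → ℝ) (B : Fin n → Set X)
    (p : Fin n → X) (e : Fin n → X → X → ℝ) (ι : X → Fin n) (D : X → X → ℝ) : Prop where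
  mem_block : ∀ x, x ∈ B (ι x)
  basepoint_mem : ∀ i, p i ∈ B i
  eq_of_eq : ∀ x y, ι x = ι y → D x y = e (ι x) x y
  eq_of_ne : ∀ x y, ι x ≠ ι y →
    D x y = e (ι x) x (p (ι x)) + d (p (ι x)) (p (ι y)) + e (ι y) (p (ι y)) y

namespace IsAmalgamation

variable {X : Type*} {n : ℕ} {d : X → X → ℝ} {B : Fin n → Set X} {p : Fin n → X}
  {e : Fin n → X → X → ℝ} {ι : X → Fin n} {D : X → X → ℝ}

lemma nonneg (hA : IsAmalgamation d B p e ι D) (hd : IsMetricOn d)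
    (he : ∀ i, IsMetricOnSet (B i) (e i)) (x y : X) : 0 ≤ D x y := by
  by_cases h : ι x = ι y
  · rw [hA.eq_of_eq x y h]
    exact (he _).nonneg (hA.mem_block x) (h ▸ hA.mem_block y)
  · rw [hA.eq_of_ne x y h]
    exact add_nonneg (add_nonneg ((he _).nonneg (hA.mem_block x) (hA.basepoint_mem _))
      (hd.nonneg _ _)) ((he _).nonneg (hA.basepoint_mem _) (hA.mem_block y))

lemma symm (hA : IsAmalgamation d B p e ι D) (hd : IsMetricOn d)
    (he : ∀ i, IsMetricOnSet (B i) (e i)) (x y : X) : D x y = D y x := by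
  by_cases h : ι x = ι y
  · rw [hA.eq_of_eq x y h, hA.eq_of_eq y x h.symm, h]
    exact (he _).2.1 _ (h ▸ hA.mem_block x) _ (hA.mem_block y)
  · rw [hA.eq_of_ne x y h, hA.eq_of_ne y x (Ne.symm h),
      (he _).2.1 x (hA.mem_block x) _ (hA.basepoint_mem _),
      (he _).2.1 _ (hA.basepoint_mem _) y (hA.mem_block y), hd.2.1 (p (ι x))]
    ring

lemma le_via_basepoints (hA : IsAmalgamation d B p e ι D) (hd : IsMetricOn d)
    (he : ∀ i, IsMetricOnSet (B i) (e i)) (x y : X) :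
    D x y ≤ e (ι x) x (p (ι x)) + d (p (ι x)) (p (ι y)) + e (ι y) y (p (ι y)) := by
  rw [(he _).2.1 y (hA.mem_block y) _ (hA.basepoint_mem _)]
  by_cases h : ι x = ι y
  · have hy : y ∈ B (ι x) := h ▸ hA.mem_block y
    rw [hA.eq_of_eq x y h, ← h, (hd.1 _ _).2 rfl, add_zero]
    exact (he _).2.2 x (hA.mem_block x) y hy _ (hA.basepoint_mem _)
  · exact (hA.eq_of_ne x y h).le

lemma crossing_le (hA : IsAmalgamation d B p e ι D) (hd : IsMetricOn d)
    (he : ∀ i, IsMetricOnSet (B i) (e i)) {x y : X} (h : ι x ≠ ι y) :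
    e (ι x) x (p (ι x)) ≤ D x y ∧ d (p (ι x)) (p (ι y)) ≤ D x y := by
  have h₁ := (he _).nonneg (hA.mem_block x) (hA.basepoint_mem (ι x))
  have h₂ := hd.nonneg (p (ι x)) (p (ι y))
  have h₃ := (he _).nonneg (hA.basepoint_mem (ι y)) (hA.mem_block y)
  rw [hA.eq_of_ne x y h]
  constructor <;> linarith

lemma chain_within_block (hA : IsAmalgamation d B p e ι D) {K : ℝ}
    (hK : ∀ i, ChainBoundedOn (B i) (e i) K) {t : ℕ} {z : ℕ → X}
    (hin : ∀ l ≤ t, ι (z l) = ι (z 0)) {M : ℝ} (hM : 0 ≤ M)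
    (hstep : ∀ k < t, D (z k) (z (k + 1)) ≤ M) : e (ι (z 0)) (z 0) (z t) ≤ K * M := by
  refine hK _ t z (fun l hl => hin l hl ▸ hA.mem_block _) M hM fun k hk => ?_
  have hD := hA.eq_of_eq (z k) (z (k + 1)) ((hin k hk.le).trans (hin (k + 1) hk).symm)
  rw [hin k hk.le] at hD
  exact hD ▸ hstep k hk

lemma escape_start (hA : IsAmalgamation d B p e ι D) (hd : IsMetricOn d)
    (he : ∀ i, IsMetricOnSet (B i) (e i)) {K : ℝ} (hK : ∀ i, ChainBoundedOn (B i) (e i) K)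
    {N k : ℕ} {z : ℕ → X} {M : ℝ} (hM : 0 ≤ M) (hstep : ∀ k < N, D (z k) (z (k + 1)) ≤ M)
    (hkN : k ≤ N) (hk : ι (z k) ≠ ι (z 0)) :
    e (ι (z 0)) (z 0) (p (ι (z 0))) ≤ (K + 1) * M ∧ ∃ a b, a ≠ b ∧ d (p a) (p b) ≤ M := by
  obtain ⟨t, htN, hin, hout⟩ := exists_first_exit (ι ∘ z) hkN hk
  have hzt : ι (z t) = ι (z 0) := hin t le_rfl
  have hcross := hA.crossing_le hd he (x := z t) (y := z (t + 1)) (hzt ▸ Ne.symm hout)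
  rw [hzt] at hcross
  have hblock := hA.chain_within_block hK hin hM fun l hl => hstep l (by omega)
  have htri := (he _).2.2 (z 0) (hA.mem_block _) _ (hA.basepoint_mem _) (z t)
    (hzt ▸ hA.mem_block _)
  have hlast := hstep t htN
  exact ⟨by linarith [hcross.1], _, _, Ne.symm hout, hcross.2.trans hlast⟩

lemma escape_end (hA : IsAmalgamation d B p e ι D) (hd : IsMetricOn d)
    (he : ∀ i, IsMetricOnSet (B i) (e i)) {K : ℝ} (hK : ∀ i, ChainBoundedOn (B i) (e i) K)
    {N k : ℕ} {z : ℕ → X} {M : ℝ} (hM : 0 ≤ M) (hstep : ∀ k < N, D (z k) (z (k + 1)) ≤ M)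
    (hkN : k ≤ N) (hk : ι (z k) ≠ ι (z 0)) :
    e (ι (z N)) (z N) (p (ι (z N))) ≤ (K + 1) * M := by
  have hrev : ∀ l < N, D (z (N - l)) (z (N - (l + 1))) ≤ M := fun l hl => by
    rw [hA.symm hd he, show N - l = N - (l + 1) + 1 by omega]
    exact hstep _ (by omega)
  have hleave : ∃ k' ≤ N, ι (z (N - k')) ≠ ι (z (N - 0)) := by
    by_cases hN : ι (z N) = ι (z 0)
    · exact ⟨N - k, by omega, by rwa [Nat.sub_sub_self hkN, Nat.sub_zero, hN]⟩
    · exact ⟨N, le_rfl, by rwa [Nat.sub_self, Nat.sub_zero, ne_comm]⟩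
  obtain ⟨k', hk'N, hk'⟩ := hleave
  simpa using (hA.escape_start hd he hK (z := fun l => z (N - l)) hM hrev hk'N hk').1

lemma chainBoundedOn_univ (hA : IsAmalgamation d B p e ι D) (hd : IsMetricOn d)
    (he : ∀ i, IsMetricOnSet (B i) (e i)) {K : ℝ} (hK : ∀ i, ChainBoundedOn (B i) (e i) K)
    {Λ : ℝ} (hΛ0 : 0 ≤ Λ) (hΛ : ∀ i j a b, a ≠ b → d (p i) (p j) ≤ Λ * d (p a) (p b)) :
    ChainBoundedOn univ D (max K (2 * (K + 1) + Λ)) := by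
  intro N z _ M hM hstep
  by_cases hin : ∀ l ≤ N, ι (z l) = ι (z 0)
  · rw [hA.eq_of_eq _ _ (hin N le_rfl).symm]
    exact (hA.chain_within_block hK hin hM hstep).trans
      (mul_le_mul_of_nonneg_right (le_max_left _ _) hM)
  push Not at hin
  obtain ⟨k, hkN, hk⟩ := hin
  obtain ⟨hstart, a, b, hab, hcross⟩ := hA.escape_start hd he hK hM hstep hkN hk
  have hend := hA.escape_end hd he hK hM hstep hkN hk
  have hbase : d (p (ι (z 0))) (p (ι (z N))) ≤ Λ * M :=
    (hΛ _ _ a b hab).trans (mul_le_mul_of_nonneg_left hcross hΛ0)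
  calc D (z 0) (z N) ≤ (2 * (K + 1) + Λ) * M := by
        linarith [hA.le_via_basepoints hd he (z 0) (z N)]
    _ ≤ max K (2 * (K + 1) + Λ) * M := mul_le_mul_of_nonneg_right (le_max_right _ _) hM

end IsAmalgamation

theorem amalgamation_uniformlyDisconnected_general {X : Type*} {n : ℕ}
    (d : X → X → ℝ) (hd : IsMetricOn d)
    (B : Fin n → Set X)
    (hdisj : ∀ i j, i ≠ j → Disjoint (B i) (B j))
    (p : Fin n → X) (hp : ∀ i, p i ∈ B i)
    (e : Fin n → (X → X → ℝ)) (he : ∀ i, IsMetricOnSet (B i) (e i))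
    (ι : X → Fin n) (hι : ∀ x, x ∈ B (ι x))
    (D : X → X → ℝ)
    (hDeq : ∀ x y, ι x = ι y → D x y = e (ι x) x y)
    (hDne : ∀ x y, ι x ≠ ι y →
      D x y = e (ι x) x (p (ι x)) + d (p (ι x)) (p (ι y)) + e (ι y) (p (ι y)) y)
    (hbilip : ∀ i, ∃ (Y : Type) (ρ : Y → Y → ℝ), IsUltrametricOn ρ ∧
      ∃ (f : X → Y) (L : ℝ), 1 ≤ L ∧ ∀ x ∈ B i, ∀ y ∈ B i,
        L⁻¹ * e i x y ≤ ρ (f x) (f y) ∧ ρ (f x) (f y) ≤ L * e i x y) :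
    UniformlyDisconnected D := by
  have hA : IsAmalgamation d B p e ι D := ⟨hι, hp, hDeq, hDne⟩
  obtain ⟨K, hK⟩ := exists_forall_chainBoundedOn fun i => by
    obtain ⟨Y, ρ, hρ, f, L, hL, hf⟩ := hbilip i
    exact ⟨L * L, hρ.chainBoundedOn_of_biLipschitz (by linarith) hf⟩
  have hbase_pos : ∀ a b, a ≠ b → 0 < d (p a) (p b) := fun a b hab =>
    hd.pos_of_ne fun h => (hdisj a b hab).ne_of_mem (hp a) (hp b) h
  obtain ⟨Λ, hΛ0, hΛ⟩ := exists_nonneg_forall_le_mul (fun q : Fin n × Fin n => d (p q.1) (p q.2))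
    (fun q : Fin n × Fin n => d (p q.1) (p q.2))
  exact uniformlyDisconnected_of_chainBoundedOn_univ (hA.nonneg hd he)
    (hA.chainBoundedOn_univ hd he hK hΛ0 fun i j a b hab => hΛ (i, j) (a, b) (hbase_pos a b hab))

/-- If every block of a finite amalgamation admits a bi-Lipschitz embedding into an
ultrametric space (i.e. is uniformly disconnected), then the amalgam is uniformly
disconnected. -/
theorem amalgamation_uniformlyDisconnected {X : Type*} [TopologicalSpace X] {n : ℕ}
    (d : X → X → ℝ) (hd : IsMetricOn d)
    (B : Fin n → Set X) (hBclopen : ∀ i, IsClopen (B i))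
    (hBne : ∀ i, (B i).Nonempty)
    (hdisj : ∀ i j, i ≠ j → Disjoint (B i) (B j)) (hcover : ⋃ i, B i = univ)
    (p : Fin n → X) (hp : ∀ i, p i ∈ B i)
    (e : Fin n → (X → X → ℝ)) (he : ∀ i, IsMetricOnSet (B i) (e i))
    (ι : X → Fin n) (hι : ∀ x, x ∈ B (ι x))
    (D : X → X → ℝ)
    (hDeq : ∀ x y, ι x = ι y → D x y = e (ι x) x y)
    (hDne : ∀ x y, ι x ≠ ι y →
      D x y = e (ι x) x (p (ι x)) + d (p (ι x)) (p (ι y)) + e (ι y) (p (ι y)) y)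
    (hbilip : ∀ i, ∃ (Y : Type) (ρ : Y → Y → ℝ), IsUltrametricOn ρ ∧
      ∃ (f : X → Y) (L : ℝ), 1 ≤ L ∧ ∀ x ∈ B i, ∀ y ∈ B i,
        L⁻¹ * e i x y ≤ ρ (f x) (f y) ∧ ρ (f x) (f y) ≤ L * e i x y) :
    UniformlyDisconnected D :=
  amalgamation_uniformlyDisconnected_general d hd B hdisj p hp e he ι hι D hDeq hDne hbilip
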